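/- For every θ ∈ ℝ^p with θ ≠ 0 it holds that N_*(∇𝓛(θ)) ≥ (L / N(θ)) · 𝓛(θ) · log(1/𝓛(θ)). -/

import Mathlib

/-!
Write `s_i = y_i f(θ, x_i)` and `𝓛 = ∑ exp (-s_i)`. Each summand is at most `𝓛`, so
`s_i ≥ log (1/𝓛)` for every `i`. By Euler's identity `⟨∇_θ f(θ, x), θ⟩ = L f(θ, x)`, the
derivative of `𝓛` in the direction `-θ` is `L ∑ exp (-s_i) s_i ≥ L 𝓛 log (1/𝓛)`, while by
definition of the dual norm it is at most `N_*(∇𝓛(θ)) N(θ)`.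
-/

open Filter RealInnerProductSpace

noncomputable section

abbrev E (p : ℕ) : Type := EuclideanSpace ℝ (Fin p)

/-- `N` is a norm on `ℝ^p`. -/
def IsNormOn {p : ℕ} (N : E p → ℝ) : Prop :=
  (∀ θ, 0 ≤ N θ) ∧ (∀ θ, N θ = 0 ↔ θ = 0) ∧
    (∀ (c : ℝ) (θ : E p), N (c • θ) = |c| * N θ) ∧
    ∀ θ θ' : E p, N (θ + θ') ≤ N θ + N θ'

/-- The dual norm `N_*(z) = sup {⟨z, v⟩ : N v ≤ 1}`. -/
def DualNorm {p : ℕ} (N : E p → ℝ) (z : E p) : ℝ :=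
  sSup ((fun v => (inner ℝ z v : ℝ)) '' {v | N v ≤ 1})

/-- The exponential loss `𝓛(θ) = Σ_i exp (-(y_i f(θ, x_i)))`. -/
def ExpLoss {p d m : ℕ} (f : E p → E d → ℝ) (x : Fin m → E d) (y : Fin m → ℝ)
    (θ : E p) : ℝ :=
  ∑ i, Real.exp (-(y i * f θ (x i)))

/-- A steepest-flow trajectory for the loss `𝓛` with respect to the norm `N`,
with derivative curve `θ'`. -/
def IsSteepestFlow {p : ℕ} (N : E p → ℝ) (𝓛 : E p → ℝ) (θ θ' : ℝ → E p) : Prop :=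
  ∀ t, (0:ℝ) ≤ t → HasDerivAt θ (θ' t) t ∧
    (inner ℝ (θ' t) (gradient 𝓛 (θ t)) : ℝ) = -(DualNorm N (gradient 𝓛 (θ t))) ^ 2 ∧
    N (θ' t) = DualNorm N (gradient 𝓛 (θ t))

/-- The soft margin `γ̃(θ) = -log 𝓛(θ) / N(θ)^L`. -/
def SoftMargin {p : ℕ} (N : E p → ℝ) (𝓛 : E p → ℝ) (L : ℝ) (θ : E p) : ℝ :=
  -Real.log (𝓛 θ) / N θ ^ L

/-- The hard margin `γ(θ) = (min_i y_i f(θ, x_i)) / N(θ)^L`. -/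
def HardMargin {p d m : ℕ} (N : E p → ℝ) (f : E p → E d → ℝ) (x : Fin m → E d)
    (y : Fin m → ℝ) (L : ℝ) (θ : E p) : ℝ :=
  (⨅ i, y i * f θ (x i)) / N θ ^ L

/-- The alignment `A(t) = ⟨θ(t)/N(θ(t)), -∇𝓛(θ(t))/N_*(∇𝓛(θ(t)))⟩`. -/
def FlowAlignment {p : ℕ} (N : E p → ℝ) (𝓛 : E p → ℝ) (θ : ℝ → E p) (t : ℝ) : ℝ :=
  inner ℝ ((N (θ t))⁻¹ • θ t) (-((DualNorm N (gradient 𝓛 (θ t)))⁻¹ • gradient 𝓛 (θ t)))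

theorem fderiv_apply_self_of_homogeneous {F : Type*} [NormedAddCommGroup F] [NormedSpace ℝ F]
    {g : F → ℝ} {L : ℝ} {θ : F} (hg : DifferentiableAt ℝ g θ)
    (hhom : ∀ c : ℝ, 0 < c → g (c • θ) = c ^ L * g θ) :
    fderiv ℝ g θ θ = L * g θ := by
  have hray : HasDerivAt (fun c : ℝ => g (c • θ)) (fderiv ℝ g θ θ) 1 := by
    have hline : HasDerivAt (fun c : ℝ => c • θ) θ 1 := by
      simpa using (hasDerivAt_id (1 : ℝ)).smul_const θ
    have hg1 : HasFDerivAt g (fderiv ℝ g θ) ((1 : ℝ) • θ) := by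
      rw [one_smul]; exact hg.hasFDerivAt
    exact hg1.comp_hasDerivAt 1 hline
  have hpow : HasDerivAt (fun c : ℝ => c ^ L * g θ) (L * g θ) 1 := by
    simpa using (Real.hasDerivAt_rpow_const (x := 1) (p := L) (Or.inl one_ne_zero)).mul_const (g θ)
  have hagree : (fun c : ℝ => c ^ L * g θ) =ᶠ[nhds 1] fun c => g (c • θ) := by
    filter_upwards [eventually_gt_nhds zero_lt_one] with c hc
    exact (hhom c hc).symm
  exact hray.unique (hpow.congr_of_eventuallyEq hagree.symm)

theorem sum_exp_neg_mul_log_one_div_le {ι : Type*} [Fintype ι] (s : ι → ℝ) :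
    (∑ i, Real.exp (-s i)) * Real.log (1 / ∑ i, Real.exp (-s i)) ≤
      ∑ i, Real.exp (-s i) * s i := by
  have hmargin : ∀ i, Real.log (1 / ∑ j, Real.exp (-s j)) ≤ s i := fun i => by
    have hle : Real.exp (-s i) ≤ ∑ j, Real.exp (-s j) :=
      Finset.single_le_sum (fun j _ => (Real.exp_pos (-s j)).le) (Finset.mem_univ i)
    have hlog := Real.log_le_log (Real.exp_pos _) hle
    rw [Real.log_exp] at hlog
    rw [one_div, Real.log_inv]
    linarith
  rw [Finset.sum_mul]
  exact Finset.sum_le_sum fun i _ =>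
    mul_le_mul_of_nonneg_left (hmargin i) (Real.exp_pos _).le

namespace IsNormOn

variable {p : ℕ} {N : E p → ℝ}

theorem pos_of_ne_zero (hN : IsNormOn N) {θ : E p} (hθ : θ ≠ 0) : 0 < N θ :=
  (hN.1 θ).lt_of_ne fun h => hθ ((hN.2.1 θ).mp h.symm)

theorem map_neg (hN : IsNormOn N) (θ : E p) : N (-θ) = N θ := by
  simpa using hN.2.2.1 (-1) θ

/-- `E p` with the norm `N` in place of the Euclidean one. -/
def Space (_N : E p → ℝ) : Type := E p

instance : AddCommGroup (Space N) := inferInstanceAs (AddCommGroup (E p))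
instance : Module ℝ (Space N) := inferInstanceAs (Module ℝ (E p))
instance : FiniteDimensional ℝ (Space N) := inferInstanceAs (FiniteDimensional ℝ (E p))

/-- Equivalence of norms in finite dimension: the identity map `(E p, N) → E p` is continuous. -/
theorem exists_norm_le_of_le_one (hN : IsNormOn N) : ∃ C : ℝ, ∀ v : E p, N v ≤ 1 → ‖v‖ ≤ C := by
  let _ : NormedAddCommGroup (Space N) := AddGroupNorm.toNormedAddCommGroup
    { toFun := N
      map_zero' := (hN.2.1 0).mpr rfl
      add_le' := hN.2.2.2
      neg' := hN.map_neg
      eq_zero_of_map_eq_zero' := fun v h => (hN.2.1 v).mp h }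
  let _ : NormedSpace ℝ (Space N) := ⟨fun c v => (hN.2.2.1 c v).le⟩
  let id : Space N →L[ℝ] E p := LinearMap.toContinuousLinearMap LinearMap.id
  exact ⟨‖id‖, fun v hv => (id.le_opNorm v).trans (mul_le_of_le_one_right (norm_nonneg id) hv)⟩

theorem inner_le_dualNorm (hN : IsNormOn N) (z : E p) {v : E p} (hv : N v ≤ 1) :
    ⟪z, v⟫ ≤ DualNorm N z := by
  obtain ⟨C, hC⟩ := hN.exists_norm_le_of_le_one
  refine le_csSup ⟨‖z‖ * C, ?_⟩ ⟨v, hv, rfl⟩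
  rintro _ ⟨w, hw, rfl⟩
  exact (real_inner_le_norm z w).trans (mul_le_mul_of_nonneg_left (hC w hw) (norm_nonneg z))

theorem inner_le_dualNorm_mul (hN : IsNormOn N) (z v : E p) :
    ⟪z, v⟫ ≤ DualNorm N z * N v := by
  rcases eq_or_ne v 0 with rfl | hv
  · simp [(hN.2.1 0).mpr rfl]
  have hNv := hN.pos_of_ne_zero hv
  have hunit : N ((N v)⁻¹ • v) ≤ 1 := by
    rw [hN.2.2.1, abs_of_pos (inv_pos.mpr hNv), inv_mul_cancel₀ hNv.ne']
  have hscaled := hN.inner_le_dualNorm z hunit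
  rw [real_inner_smul_right, inv_mul_le_iff₀ hNv] at hscaled
  linarith

end IsNormOn

section ExpLoss

variable {p d m : ℕ} {f : E p → E d → ℝ} {x : Fin m → E d} {y : Fin m → ℝ} {θ : E p}

theorem inner_gradient_expLoss (hf : ∀ i, DifferentiableAt ℝ (fun θ => f θ (x i)) θ)
    (v : E p) :
    ⟪gradient (ExpLoss f x y) θ, v⟫ =
      -∑ i, Real.exp (-(y i * f θ (x i))) * (y i * fderiv ℝ (fun θ => f θ (x i)) θ v) := by
  have hD : HasFDerivAt (ExpLoss f x y)
      (∑ i, Real.exp (-(y i * f θ (x i))) • -(y i • fderiv ℝ (fun θ => f θ (x i)) θ)) θ :=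
    HasFDerivAt.fun_sum fun i _ => ((hf i).hasFDerivAt.const_mul (y i)).neg.exp
  rw [hD.hasGradientAt.gradient, InnerProductSpace.toDual_symm_apply]
  simp [Finset.sum_neg_distrib]

theorem inner_gradient_expLoss_neg_self {L : ℝ}
    (hf : ∀ i, DifferentiableAt ℝ (fun θ => f θ (x i)) θ)
    (hhom : ∀ c : ℝ, 0 < c → ∀ i, f (c • θ) (x i) = c ^ L * f θ (x i)) :
    ⟪gradient (ExpLoss f x y) θ, -θ⟫ =
      L * ∑ i, Real.exp (-(y i * f θ (x i))) * (y i * f θ (x i)) := by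
  rw [inner_neg_right, inner_gradient_expLoss hf, neg_neg, Finset.mul_sum]
  refine Finset.sum_congr rfl fun i _ => ?_
  rw [fderiv_apply_self_of_homogeneous (hf i) fun c hc => hhom c hc i]
  ring

end ExpLoss

theorem stmt_17_general {p d m : ℕ}
    (x : Fin m → E d) (y : Fin m → ℝ)
    (L : ℝ) (hL : 0 < L) (f : E p → E d → ℝ)
    (hf : ∀ x' : E d, ContDiff ℝ 1 fun θ => f θ x')
    (hhom : ∀ c : ℝ, 0 < c → ∀ (θ : E p) (x' : E d), f (c • θ) x' = c ^ L * f θ x')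
    (N : E p → ℝ) (hN : IsNormOn N)
    (θ : E p) (hθ : θ ≠ 0) :
    DualNorm N (gradient (ExpLoss f x y) θ) ≥
      (L / N θ) * ExpLoss f x y θ * Real.log (1 / ExpLoss f x y θ) := by
  have hNθ := hN.pos_of_ne_zero hθ
  have hdual := hN.inner_le_dualNorm_mul (gradient (ExpLoss f x y) θ) (-θ)
  rw [hN.map_neg, inner_gradient_expLoss_neg_self (fun i => (hf (x i)).differentiable one_ne_zero θ)
    fun c hc i => hhom c hc θ (x i)] at hdual
  calc (L / N θ) * ExpLoss f x y θ * Real.log (1 / ExpLoss f x y θ)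
      = L * (ExpLoss f x y θ * Real.log (1 / ExpLoss f x y θ)) / N θ := by ring
    _ ≤ (L * ∑ i, Real.exp (-(y i * f θ (x i))) * (y i * f θ (x i))) / N θ := by
        gcongr
        exact sum_exp_neg_mul_log_one_div_le fun i => y i * f θ (x i)
    _ ≤ DualNorm N (gradient (ExpLoss f x y) θ) := by rwa [div_le_iff₀ hNθ]

theorem stmt_17 {p d m : ℕ} (hp : 0 < p) (hd : 0 < d) (hm : 0 < m)
    (x : Fin m → E d) (y : Fin m → ℝ) (hy : ∀ i, y i = 1 ∨ y i = -1)
    (L : ℝ) (hL : 0 < L) (f : E p → E d → ℝ)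
    (hf : ∀ x' : E d, ContDiff ℝ 1 fun θ => f θ x')
    (hhom : ∀ c : ℝ, 0 < c → ∀ (θ : E p) (x' : E d), f (c • θ) x' = c ^ L * f θ x')
    (N : E p → ℝ) (hN : IsNormOn N)
    (θ : E p) (hθ : θ ≠ 0) :
    DualNorm N (gradient (ExpLoss f x y) θ) ≥
      (L / N θ) * ExpLoss f x y θ * Real.log (1 / ExpLoss f x y θ) :=
  stmt_17_general x y L hL f hf hhom N hN θ hθ
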